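/- Let (S, E, T) be a closed and consistent observation table over input alphabet Σ and output alphabet O, let (Q̂, q̂0, δ̂, L̂) be its hypothesis Moore machine with n = |Q̂| states, and let f : Σ* → O be a function computed by some Moore machine over (Σ, O). If there exists a counterexample sequence c with L̂(δ̂*(q̂0, c)) ≠ f(c), then at least one of the following holds: (a) every Moore machine over (Σ, O) computing f has strictly more than n states, or (b) there exist s ∈ S ∪ {s·σ : s ∈ S, σ ∈ Σ} and e ∈ E such that T(s·e) ≠ f(s·e). -/

import Mathlib

/-- A Moore machine over input alphabet `σ` and output alphabet `O`, with state type `Q`: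
initial state `q0`, transition function `δ`, and output labeling `L`. -/
structure MooreMachine (σ O Q : Type*) where
  q0 : Q
  δ : Q → σ → Q
  L : Q → O

/-- `M.run q w` is the extended transition function `δ*(q, w)`, the left fold of `δ` over `w`. -/
def MooreMachine.run {σ O Q : Type*} (M : MooreMachine σ O Q) (q : Q) (w : List σ) : Q :=
  w.foldl M.δ q

/-- An observation table `(S, E, T)`: finite sets of prefixes `S` (prefix-closed, containing ε)
and suffixes `E` (suffix-closed, containing ε), and an entry function `T`. -/
structure ObsTable (σ O : Type*) where
  S : Finset (List σ)
  E : Finset (List σ)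
  T : List σ → O
  nil_mem_S : [] ∈ S
  prefixClosed : ∀ s ∈ S, ∀ t : List σ, t <+: s → t ∈ S
  nil_mem_E : [] ∈ E
  suffixClosed : ∀ e ∈ E, ∀ t : List σ, t <:+ e → t ∈ E

/-- `row(s) : E → O`, given by `row(s)(e) = T(s·e)`. -/
def ObsTable.row {σ O : Type*} (Ot : ObsTable σ O) (s : List σ) : {e // e ∈ Ot.E} → O :=
  fun e => Ot.T (s ++ e.1)

/-- The table is closed if every `row(s·σ)` with `s ∈ S` coincides with `row(s')` for some `s' ∈ S`. -/
def ObsTable.Closed {σ O : Type*} (Ot : ObsTable σ O) : Prop :=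
  ∀ s ∈ Ot.S, ∀ a : σ, ∃ s' ∈ Ot.S, Ot.row (s ++ [a]) = Ot.row s'

/-- The table is consistent if equal rows of elements of `S` have equal one-step extensions. -/
def ObsTable.Consistent {σ O : Type*} (Ot : ObsTable σ O) : Prop :=
  ∀ s₁ ∈ Ot.S, ∀ s₂ ∈ Ot.S,
    Ot.row s₁ = Ot.row s₂ → ∀ a : σ, Ot.row (s₁ ++ [a]) = Ot.row (s₂ ++ [a])

/-- `s ∈ S ∪ {t·σ : t ∈ S, σ ∈ Σ}`, the rows of the observation table. -/
def ObsTable.InTableRows {σ O : Type*} (Ot : ObsTable σ O) (s : List σ) : Prop :=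
  s ∈ Ot.S ∨ ∃ t ∈ Ot.S, ∃ a : σ, s = t ++ [a]

/-- The state set of the hypothesis machine: `Q̂ = {row(s) : s ∈ S}`. -/
def ObsTable.HQ {σ O : Type*} (Ot : ObsTable σ O) : Type _ :=
  {f : {e // e ∈ Ot.E} → O // ∃ s ∈ Ot.S, Ot.row s = f}

/-- The hypothesis state `row(s)` for `s ∈ S`. -/
def ObsTable.stateOf {σ O : Type*} (Ot : ObsTable σ O) (s : List σ) (hs : s ∈ Ot.S) : Ot.HQ :=
  ⟨Ot.row s, s, hs, rfl⟩

/-- `M` is the hypothesis Moore machine of the table: its initial state is `row(ε)`,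
its transitions satisfy `δ̂(row(s), σ) = row(s·σ)` for `s ∈ S`, and its outputs satisfy
`L̂(row(s)) = row(s)(ε) = T(s)` for `s ∈ S`. -/
def ObsTable.IsHypothesis {σ O : Type*} (Ot : ObsTable σ O)
    (M : MooreMachine σ O Ot.HQ) : Prop :=
  M.q0 = Ot.stateOf [] Ot.nil_mem_S ∧
  (∀ s, ∀ hs : s ∈ Ot.S, ∀ a : σ, (M.δ (Ot.stateOf s hs) a).1 = Ot.row (s ++ [a])) ∧
  (∀ s, ∀ hs : s ∈ Ot.S, M.L (Ot.stateOf s hs) = Ot.T s)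

/-- The number of states of the hypothesis machine: the number of distinct rows `row(s)`, `s ∈ S`. -/
def ObsTable.numStates {σ O : Type*} [DecidableEq O] (Ot : ObsTable σ O) : ℕ :=
  (Ot.S.image Ot.row).card

/-- A Moore machine is consistent with the table if `L(δ*(q0, s·e)) = T(s·e)` for every
`s ∈ S ∪ S·Σ` and every `e ∈ E`. -/
def MooreMachine.ConsistentWith {σ O Q : Type*} (M : MooreMachine σ O Q)
    (Ot : ObsTable σ O) : Prop :=
  ∀ s : List σ, Ot.InTableRows s → ∀ e ∈ Ot.E, M.L (M.run M.q0 (s ++ e)) = Ot.T (s ++ e)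

/-- `M` computes `f : Σ* → O` if `f(w) = L(δ*(q0, w))` for all `w`. -/
def MooreMachine.Computes {σ O Q : Type*} (M : MooreMachine σ O Q) (f : List σ → O) : Prop :=
  ∀ w : List σ, f w = M.L (M.run M.q0 w)

/-- `φ` is an isomorphism of Moore machines: a bijection on states preserving the initial
state, the transitions, and the output labeling. -/
def MooreIso {σ O Q₁ Q₂ : Type*} (M₁ : MooreMachine σ O Q₁) (M₂ : MooreMachine σ O Q₂)
    (φ : Q₁ → Q₂) : Prop :=
  Function.Bijective φ ∧ φ M₁.q0 = M₂.q0 ∧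
    (∀ q a, φ (M₁.δ q a) = M₂.δ (φ q) a) ∧ ∀ q, M₂.L (φ q) = M₁.L q

universe u v

/-!
Suppose every table entry agrees with `f` and `M'` computes `f` with at most `n` states. Sending a
state `q` of `M'` to its row `e ↦ L'(δ'*(q, e))` maps `δ'*(q₀', s)` to `row(s)` for every table row
`s`, so it hits all `n` rows of `S` and is therefore injective. Hence `δ'*(q₀', w)` is determined by
its row, and by induction on `w` the hypothesis state reached by `w` is exactly that row. Reading off
the entry at `ε`, the hypothesis computes `f`, so there is no counterexample.
-/

lemma Function.injective_of_card_le_of_subset_image {α β : Type*} [Fintype α] [DecidableEq β]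
    {g : α → β} {t : Finset β} (ht : t ⊆ Finset.univ.image g)
    (hcard : Fintype.card α ≤ t.card) : Function.Injective g := by
  have heq : (Finset.univ.image g).card = Finset.univ.card :=
    le_antisymm Finset.card_image_le (hcard.trans (Finset.card_le_card ht))
  simpa using Finset.injOn_of_card_image_eq heq

namespace MooreMachine

variable {σ O Q : Type*} (M : MooreMachine σ O Q)

lemma run_append (q : Q) (w₁ w₂ : List σ) : M.run q (w₁ ++ w₂) = M.run (M.run q w₁) w₂ := by
  simp [run, List.foldl_append]

lemma run_append_singleton (q : Q) (w : List σ) (a : σ) :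
    M.run q (w ++ [a]) = M.δ (M.run q w) a := by
  simp [run]

def stateRow (Ot : ObsTable σ O) (q : Q) : {e // e ∈ Ot.E} → O :=
  fun e => M.L (M.run q e.1)

end MooreMachine

namespace ObsTable

variable {σ O : Type*}

def AgreesWith (Ot : ObsTable σ O) (f : List σ → O) : Prop :=
  ∀ s, Ot.InTableRows s → ∀ e ∈ Ot.E, Ot.T (s ++ e) = f (s ++ e)

variable {Ot : ObsTable σ O} {f : List σ → O} {Q : Type*} {M' : MooreMachine σ O Q}

lemma AgreesWith.stateRow_run (hagree : Ot.AgreesWith f) (hM' : M'.Computes f) {s : List σ}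
    (hs : Ot.InTableRows s) : M'.stateRow Ot (M'.run M'.q0 s) = Ot.row s := by
  funext e
  rw [MooreMachine.stateRow, ← M'.run_append, ← hM', ObsTable.row, hagree s hs e.1 e.2]

lemma AgreesWith.stateRow_injective [Fintype Q] [DecidableEq O] (hagree : Ot.AgreesWith f)
    (hM' : M'.Computes f) (hcard : Fintype.card Q ≤ Ot.numStates) :
    Function.Injective (M'.stateRow Ot) := by
  refine Function.injective_of_card_le_of_subset_image (t := Ot.S.image Ot.row) ?_ ?_
  · intro r hr
    obtain ⟨s, hs, rfl⟩ := Finset.mem_image.mp hr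
    exact Finset.mem_image.mpr ⟨_, Finset.mem_univ _, hagree.stateRow_run hM' (Or.inl hs)⟩
  · exact hcard

lemma IsHypothesis.L_eq {M : MooreMachine σ O Ot.HQ} (hM : Ot.IsHypothesis M) (q : Ot.HQ) :
    M.L q = q.1 ⟨[], Ot.nil_mem_E⟩ := by
  obtain ⟨_, s, hs, rfl⟩ := q
  change M.L (Ot.stateOf s hs) = _
  simp [hM.2.2 s hs, ObsTable.row]

lemma IsHypothesis.run_eq_stateRow {M : MooreMachine σ O Ot.HQ} (hM : Ot.IsHypothesis M)
    (hagree : Ot.AgreesWith f) (hM' : M'.Computes f) (hinj : Function.Injective (M'.stateRow Ot))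
    (w : List σ) : (M.run M.q0 w).1 = M'.stateRow Ot (M'.run M'.q0 w) := by
  induction w using List.reverseRecOn with
  | nil =>
    rw [hM.1]
    exact (hagree.stateRow_run hM' (Or.inl Ot.nil_mem_S)).symm
  | append_singleton w a ih =>
    obtain ⟨s, hs, hrow⟩ := (M.run M.q0 w).2
    have hstate : M.run M.q0 w = Ot.stateOf s hs := Subtype.ext hrow.symm
    have hsame : M'.run M'.q0 w = M'.run M'.q0 s :=
      hinj (by rw [← ih, hstate, hagree.stateRow_run hM' (Or.inl hs)]; rfl)
    rw [M.run_append_singleton, M'.run_append_singleton, hstate, hM.2.1 s hs a, hsame,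
      ← M'.run_append_singleton, hagree.stateRow_run hM' (Or.inr ⟨s, hs, a, rfl⟩)]

lemma IsHypothesis.computes [Fintype Q] [DecidableEq O] {M : MooreMachine σ O Ot.HQ}
    (hM : Ot.IsHypothesis M) (hagree : Ot.AgreesWith f) (hM' : M'.Computes f)
    (hcard : Fintype.card Q ≤ Ot.numStates) : M.Computes f := by
  intro w
  have hinj := hagree.stateRow_injective hM' hcard
  rw [hM.L_eq, hM.run_eq_stateRow hagree hM' hinj, MooreMachine.stateRow, hM' w]
  rfl

end ObsTable

theorem counterexample_dichotomy_general {σ O : Type*} [DecidableEq O]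
    (Ot : ObsTable σ O)
    (M : MooreMachine σ O Ot.HQ) (hM : Ot.IsHypothesis M)
    (f : List σ → O)
    (c : List σ) (hc : M.L (M.run M.q0 c) ≠ f c) :
    (∀ (Q : Type v) [Fintype Q] (M' : MooreMachine σ O Q),
        M'.Computes f → Ot.numStates < Fintype.card Q) ∨
      (∃ s : List σ, Ot.InTableRows s ∧ ∃ e ∈ Ot.E, Ot.T (s ++ e) ≠ f (s ++ e)) := by
  by_cases hagree : Ot.AgreesWith f
  · left
    intro Q _ M' hM'
    by_contra! hcard
    exact hc (hM.computes hagree hM' hcard c).symm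
  · right
    simpa [ObsTable.AgreesWith] using hagree

/-- If `f` is computed by some Moore machine and there is a counterexample `c`
on which the hypothesis machine disagrees with `f`, then either (a) every Moore machine
computing `f` has strictly more than `n = |Q̂|` states, or (b) some table entry disagrees
with `f`. -/
theorem counterexample_dichotomy {σ O : Type*} [Fintype σ] [Nonempty σ]
    [Fintype O] [Nonempty O] [DecidableEq O]
    (Ot : ObsTable σ O) (hclosed : Ot.Closed) (hcons : Ot.Consistent)
    (M : MooreMachine σ O Ot.HQ) (hM : Ot.IsHypothesis M)
    (f : List σ → O)
    (hf : ∃ (Q : Type u) (_ : Fintype Q) (M' : MooreMachine σ O Q), M'.Computes f)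
    (c : List σ) (hc : M.L (M.run M.q0 c) ≠ f c) :
    (∀ (Q : Type v) [Fintype Q] (M' : MooreMachine σ O Q),
        M'.Computes f → Ot.numStates < Fintype.card Q) ∨
      (∃ s : List σ, Ot.InTableRows s ∧ ∃ e ∈ Ot.E, Ot.T (s ++ e) ≠ f (s ++ e)) :=
  counterexample_dichotomy_general Ot M hM f c hc
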